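/- The average codeword length of the Fibonacci distribution under the anti-uniform code equals (f_{n+3} - 3)/f_{n+1}, i.e., sum_{i=1}^{n-1} i · f_{n-i}/f_{n+1} + (n-1) · f_2/f_{n+1} = (f_{n+3} - 3)/f_{n+1}. -/

import Mathlib

open Finset

/-- Average length of the anti-uniform code (lengths `1,2,…,n-1,n-1`) on `n` symbols. -/
noncomputable def avgLen (n : ℕ) (p : ℕ → ℝ) : ℝ :=
  ∑ i ∈ Finset.Icc 1 (n - 1), (i : ℝ) * p i + ((n : ℝ) - 1) * p n

/-- The Fibonacci distribution on `n` symbols. -/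
noncomputable def fibDist (n : ℕ) : ℕ → ℝ := fun i =>
  if i = n then (Nat.fib 2 : ℝ) / (Nat.fib (n + 1) : ℝ)
  else (Nat.fib (n - i) : ℝ) / (Nat.fib (n + 1) : ℝ)

/-!
Multiplying by `f (n+1)`, the claim becomes `∑_{i<n} i f (n-i) + n + 2 = f (n+3)` in `ℕ`
(the term `i = 0` is harmless). Passing from `n` to `n + 1` shifts every weight `i` up by one,
so the weighted sum grows by the partial sum `∑_{i<n} f (n-i) = f (n+2) - 1`, which is exactly
what the Fibonacci recurrence requires.
-/

namespace Nat

theorem sum_range_fib_sub (n : ℕ) : ∑ i ∈ range n, fib (n - i) + 1 = fib (n + 2) := by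
  induction n with
  | zero => rfl
  | succ n ih =>
    rw [sum_range_succ', fib_add_two (n := n + 1), ← ih]
    simp only [add_tsub_add_eq_tsub_right, Nat.sub_zero]
    ring

theorem sum_range_mul_fib_sub (n : ℕ) : ∑ i ∈ range n, i * fib (n - i) + n + 2 = fib (n + 3) := by
  induction n with
  | zero => rfl
  | succ n ih =>
    rw [sum_range_succ', show n + 1 + 3 = n + 2 + 2 from rfl, fib_add_two, ← ih,
      ← sum_range_fib_sub n]
    simp only [add_tsub_add_eq_tsub_right, add_mul, one_mul, sum_add_distrib, zero_mul]
    ring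

end Nat

theorem avgLen_fibDist (n : ℕ) :
    avgLen n (fibDist n) = ((Nat.fib (n + 3) : ℝ) - 3) / (Nat.fib (n + 1) : ℝ) := by
  have hweighted : ∑ i ∈ Icc 1 (n - 1), (i : ℝ) * fibDist n i =
      (∑ i ∈ range n, i * Nat.fib (n - i) : ℕ) / Nat.fib (n + 1) := by
    have hsub : Icc 1 (n - 1) ⊆ range n := fun i hi => by
      simp only [mem_Icc, mem_range] at hi ⊢; omega
    rw [Nat.cast_sum, ← sum_subset hsub, sum_div]
    · refine sum_congr rfl fun i hi => ?_
      have hin : i ≠ n := by simp only [mem_Icc] at hi; omega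
      simp [fibDist, hin, mul_div_assoc]
    · intro i hi hi'
      have hi0 : i = 0 := by simp only [mem_Icc, mem_range] at hi hi'; omega
      simp [hi0]
  have hlast : fibDist n n = 1 / Nat.fib (n + 1) := by simp [fibDist]
  have hfib : ((∑ i ∈ range n, i * Nat.fib (n - i) : ℕ) : ℝ) + n + 2 = Nat.fib (n + 3) := by
    exact_mod_cast Nat.sum_range_mul_fib_sub n
  rw [avgLen, hweighted, hlast, ← hfib]
  ring
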